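/- arXiv:math/0508085 — 3 statements merged into one kernel-verified Lean document; each statement's English description precedes it below -/
import Mathlib

section
/- Bombieri's inequality: If x, y_1, ..., y_n are vectors in an inner product space (H, ⟨·,·⟩) over the real or complex field, then ∑_{i=1}^n |⟨x, y_i⟩|² ≤ ‖x‖² · max_{1≤i≤n} { ∑_{j=1}^n |⟨y_i, y_j⟩| }. -/
/-!
Put `a i = ⟪x, y i⟫` and `z = ∑ i, conj (a i) • y i`. Then `⟪x, z⟫ = ∑ i, ‖a i‖ ^ 2 =: S`, so
`S ≤ ‖x‖ ‖z‖` by Cauchy–Schwarz. Expanding `‖z‖ ^ 2` and bounding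
`‖a i‖ ‖a j‖ ≤ (‖a i‖ ^ 2 + ‖a j‖ ^ 2) / 2` (Schur's test for the symmetric matrix
`‖⟪y i, y j⟫‖`) gives `‖z‖ ^ 2 ≤ S M`, with `M` the largest row sum. Hence
`S ^ 2 ≤ ‖x‖ ^ 2 S M`, and dividing by `S` finishes.
-/

open Finset
open scoped InnerProductSpace

theorem sum_sum_mul_mul_le_of_symm {ι : Type*} [Fintype ι] (u : ι → ℝ) {b : ι → ι → ℝ}
    (hb : ∀ i j, 0 ≤ b i j) (hsymm : ∀ i j, b i j = b j i) {M : ℝ}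
    (hM : ∀ i, ∑ j, b i j ≤ M) :
    ∑ i, ∑ j, u i * u j * b i j ≤ M * ∑ i, u i ^ 2 := by
  have hswap : ∑ i, ∑ j, u j ^ 2 * b i j = ∑ i, ∑ j, u i ^ 2 * b i j := by
    rw [sum_comm]
    exact sum_congr rfl fun i _ => sum_congr rfl fun j _ => by rw [hsymm]
  calc ∑ i, ∑ j, u i * u j * b i j
      ≤ ∑ i, ∑ j, (u i ^ 2 * b i j + u j ^ 2 * b i j) / 2 := by
        gcongr with i _ j _
        nlinarith [mul_nonneg (sq_nonneg (u i - u j)) (hb i j)]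
    _ = ∑ i, u i ^ 2 * ∑ j, b i j := by
        simp only [add_div, sum_add_distrib, ← sum_div, hswap, mul_sum]
        ring
    _ ≤ ∑ i, u i ^ 2 * M := by gcongr with i _; exact hM i
    _ = M * ∑ i, u i ^ 2 := by rw [← sum_mul, mul_comm]

section InnerProductSpace

variable {𝕜 H ι : Type*} [RCLike 𝕜] [NormedAddCommGroup H] [InnerProductSpace 𝕜 H]
  [Fintype ι]

theorem inner_sum_smul_sum_smul (c : ι → 𝕜) (y : ι → H) :
    ⟪∑ i, c i • y i, ∑ j, c j • y j⟫_𝕜 = ∑ i, ∑ j, starRingEnd 𝕜 (c i) * c j * ⟪y i, y j⟫_𝕜 := by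
  rw [sum_inner]
  simp only [inner_smul_left, inner_sum, inner_smul_right, mul_assoc, mul_left_comm]

theorem norm_sum_smul_sq_le (c : ι → 𝕜) (y : ι → H) :
    ‖∑ i, c i • y i‖ ^ 2 ≤ ∑ i, ∑ j, ‖c i‖ * ‖c j‖ * ‖⟪y i, y j⟫_𝕜‖ := by
  calc ‖∑ i, c i • y i‖ ^ 2 = ‖⟪∑ i, c i • y i, ∑ j, c j • y j⟫_𝕜‖ := by
        rw [inner_self_eq_norm_sq_to_K, norm_pow, RCLike.norm_ofReal, abs_norm]
    _ ≤ ∑ i, ∑ j, ‖c i‖ * ‖c j‖ * ‖⟪y i, y j⟫_𝕜‖ := by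
        rw [inner_sum_smul_sum_smul]
        refine (norm_sum_le _ _).trans (sum_le_sum fun i _ => (norm_sum_le _ _).trans ?_)
        simp only [norm_mul, RCLike.norm_conj, le_refl]

theorem norm_sum_smul_sq_le_of_sum_norm_inner_le (c : ι → 𝕜) {y : ι → H} {M : ℝ}
    (hM : ∀ i, ∑ j, ‖⟪y i, y j⟫_𝕜‖ ≤ M) :
    ‖∑ i, c i • y i‖ ^ 2 ≤ M * ∑ i, ‖c i‖ ^ 2 :=
  (norm_sum_smul_sq_le c y).trans <|
    sum_sum_mul_mul_le_of_symm _ (fun _ _ => norm_nonneg _)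
      (fun i j => norm_inner_symm (y i) (y j)) hM

theorem sum_norm_inner_sq_le_of_norm_sum_smul_sq_le (x : H) {y : ι → H} {M : ℝ} (hM0 : 0 ≤ M)
    (hM : ∀ c : ι → 𝕜, ‖∑ i, c i • y i‖ ^ 2 ≤ M * ∑ i, ‖c i‖ ^ 2) :
    ∑ i, ‖⟪x, y i⟫_𝕜‖ ^ 2 ≤ M * ‖x‖ ^ 2 := by
  set S := ∑ i, ‖⟪x, y i⟫_𝕜‖ ^ 2
  set z := ∑ i, starRingEnd 𝕜 ⟪x, y i⟫_𝕜 • y i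
  have hxz : ⟪x, z⟫_𝕜 = (S : 𝕜) := by
    simp only [z, S, inner_sum, inner_smul_right, RCLike.conj_mul]
    push_cast
    rfl
  have hS_le : S ≤ ‖x‖ * ‖z‖ := by
    have := norm_inner_le_norm (𝕜 := 𝕜) x z
    rwa [hxz, RCLike.norm_ofReal, abs_of_nonneg (by positivity)] at this
  have hz : ‖z‖ ^ 2 ≤ M * S := by
    simpa only [RCLike.norm_conj] using hM fun i => starRingEnd 𝕜 ⟪x, y i⟫_𝕜
  have hS0 : 0 ≤ S := by positivity
  rcases hS0.eq_or_lt with hS | hS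
  · rw [← hS]; positivity
  · refine le_of_mul_le_mul_right ?_ hS
    calc S * S ≤ (‖x‖ * ‖z‖) ^ 2 := by nlinarith
      _ = ‖x‖ ^ 2 * ‖z‖ ^ 2 := mul_pow _ _ _
      _ ≤ ‖x‖ ^ 2 * (M * S) := by gcongr
      _ = M * ‖x‖ ^ 2 * S := by ring

end InnerProductSpace

/-- Bombieri's inequality. -/
theorem bombieri_inequality {𝕜 H : Type*} [RCLike 𝕜] [NormedAddCommGroup H]
    [InnerProductSpace 𝕜 H] {n : ℕ} (hn : 0 < n) (x : H) (y : Fin n → H) :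
    ∑ i, ‖(inner 𝕜 x (y i) : 𝕜)‖ ^ 2 ≤
      ‖x‖ ^ 2 *
        Finset.univ.sup' (Finset.univ_nonempty_iff.mpr (Fin.pos_iff_nonempty.mp hn))
          (fun i => ∑ j, ‖(inner 𝕜 (y i) (y j) : 𝕜)‖) := by
  set M := Finset.univ.sup' (Finset.univ_nonempty_iff.mpr (Fin.pos_iff_nonempty.mp hn))
    (fun i => ∑ j, ‖(inner 𝕜 (y i) (y j) : 𝕜)‖)
  have hrow : ∀ i, ∑ j, ‖⟪y i, y j⟫_𝕜‖ ≤ M := fun i =>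
    le_sup' (fun i => ∑ j, ‖⟪y i, y j⟫_𝕜‖) (mem_univ i)
  have hM0 : 0 ≤ M := (sum_nonneg fun _ _ => norm_nonneg _).trans (hrow ⟨0, hn⟩)
  rw [mul_comm]
  exact sum_norm_inner_sq_le_of_norm_sum_smul_sq_le x hM0
    fun c => norm_sum_smul_sq_le_of_sum_norm_inner_le c hrow
end

section
/- Pečarić's inequality: Let x, y_1, ..., y_n be vectors in an inner product space (H, ⟨·,·⟩) over the real or complex field 𝕂 and let c_1, ..., c_n ∈ 𝕂. Then | ∑_{k=1}^n c_k ⟨x, y_k⟩ |² ≤ ‖x‖² · ∑_{i=1}^n |c_i|² ( ∑_{j=1}^n |⟨y_i, y_j⟩| ) ≤ ‖x‖² · ( ∑_{k=1}^n |c_k|² ) · max_{1≤i≤n} { ∑_{j=1}^n |⟨y_i, y_j⟩| }. -/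
/-!
Writing `u = ∑ c k • y k`, the sum on the left is `⟪x, u⟫`, so Cauchy–Schwarz reduces the first
inequality to the Bombieri-type bound `‖u‖² ≤ ∑ i, |c i|² ∑ j, |⟪y i, y j⟫|`. Expanding `‖u‖²` as a
double sum and bounding `|c i| |c j| ≤ (|c i|² + |c j|²) / 2` gives it, since the weights
`|⟪y i, y j⟫|` are symmetric in `i, j`. The second inequality bounds each row sum by the maximum.
-/

open Finset

namespace Finset

theorem sum_sum_mul_mul_le_sum_sq_mul_sum {ι : Type*} (s : Finset ι) (a : ι → ℝ)
    (t : ι → ι → ℝ) (ht_symm : ∀ i j, t i j = t j i) (ht_nonneg : ∀ i j, 0 ≤ t i j) :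
    ∑ i ∈ s, ∑ j ∈ s, a i * a j * t i j ≤ ∑ i ∈ s, a i ^ 2 * ∑ j ∈ s, t i j := by
  have h_swap : ∑ i ∈ s, ∑ j ∈ s, a j ^ 2 * t i j = ∑ i ∈ s, ∑ j ∈ s, a i ^ 2 * t i j := by
    rw [sum_comm]
    simp only [ht_symm]
  calc ∑ i ∈ s, ∑ j ∈ s, a i * a j * t i j
      ≤ ∑ i ∈ s, ∑ j ∈ s, (a i ^ 2 * t i j + a j ^ 2 * t i j) / 2 := by
        gcongr with i _ j _
        nlinarith [ht_nonneg i j, mul_nonneg (sq_nonneg (a i - a j)) (ht_nonneg i j)]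
    _ = ∑ i ∈ s, a i ^ 2 * ∑ j ∈ s, t i j := by
        simp only [← sum_div, sum_add_distrib, h_swap, mul_sum]
        ring

theorem sum_mul_le_sum_mul_sup' {ι : Type*} (s : Finset ι) (hs : s.Nonempty)
    (w f : ι → ℝ) (hw : ∀ i ∈ s, 0 ≤ w i) :
    ∑ i ∈ s, w i * f i ≤ (∑ i ∈ s, w i) * s.sup' hs f := by
  rw [sum_mul]
  exact sum_le_sum fun i hi => mul_le_mul_of_nonneg_left (le_sup' f hi) (hw i hi)

end Finset

section InnerProductSpace

variable {𝕜 H ι : Type*} [RCLike 𝕜] [NormedAddCommGroup H] [InnerProductSpace 𝕜 H]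

theorem norm_sum_smul_sq_le_sum_sum (s : Finset ι) (c : ι → 𝕜) (y : ι → H) :
    ‖∑ i ∈ s, c i • y i‖ ^ 2 ≤
      ∑ i ∈ s, ∑ j ∈ s, ‖c i‖ * ‖c j‖ * ‖(inner 𝕜 (y i) (y j) : 𝕜)‖ := by
  set u := ∑ i ∈ s, c i • y i
  have h_expand : (inner 𝕜 u u : 𝕜) =
      ∑ i ∈ s, ∑ j ∈ s, starRingEnd 𝕜 (c i) * c j * inner 𝕜 (y i) (y j) := by
    rw [sum_inner]
    simp only [u, inner_smul_left, inner_sum, inner_smul_right, mul_left_comm (c _), mul_assoc]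
  calc ‖u‖ ^ 2 = RCLike.re (inner 𝕜 u u : 𝕜) := (inner_self_eq_norm_sq u).symm
    _ ≤ ‖(inner 𝕜 u u : 𝕜)‖ := RCLike.re_le_norm _
    _ ≤ ∑ i ∈ s, ∑ j ∈ s, ‖starRingEnd 𝕜 (c i) * c j * inner 𝕜 (y i) (y j)‖ := by
        rw [h_expand]
        exact (norm_sum_le _ _).trans (sum_le_sum fun i _ => norm_sum_le _ _)
    _ = ∑ i ∈ s, ∑ j ∈ s, ‖c i‖ * ‖c j‖ * ‖(inner 𝕜 (y i) (y j) : 𝕜)‖ := by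
        simp only [norm_mul, RCLike.norm_conj]

theorem norm_sum_smul_sq_le_sum_norm_sq_mul_sum_norm_inner (s : Finset ι) (c : ι → 𝕜)
    (y : ι → H) :
    ‖∑ i ∈ s, c i • y i‖ ^ 2 ≤
      ∑ i ∈ s, ‖c i‖ ^ 2 * ∑ j ∈ s, ‖(inner 𝕜 (y i) (y j) : 𝕜)‖ :=
  (norm_sum_smul_sq_le_sum_sum s c y).trans <|
    s.sum_sum_mul_mul_le_sum_sq_mul_sum _ _ (fun i j => norm_inner_symm (y i) (y j))
      fun _ _ => norm_nonneg _

theorem norm_sum_mul_inner_sq_le (s : Finset ι) (x : H) (c : ι → 𝕜) (y : ι → H) :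
    ‖∑ k ∈ s, c k * (inner 𝕜 x (y k) : 𝕜)‖ ^ 2 ≤
      ‖x‖ ^ 2 * ∑ i ∈ s, ‖c i‖ ^ 2 * ∑ j ∈ s, ‖(inner 𝕜 (y i) (y j) : 𝕜)‖ := by
  have h_inner : ∑ k ∈ s, c k * (inner 𝕜 x (y k) : 𝕜) = inner 𝕜 x (∑ k ∈ s, c k • y k) := by
    simp only [inner_sum, inner_smul_right]
  calc ‖∑ k ∈ s, c k * (inner 𝕜 x (y k) : 𝕜)‖ ^ 2
      ≤ (‖x‖ * ‖∑ k ∈ s, c k • y k‖) ^ 2 := by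
        rw [h_inner]
        gcongr
        exact norm_inner_le_norm _ _
    _ = ‖x‖ ^ 2 * ‖∑ k ∈ s, c k • y k‖ ^ 2 := mul_pow _ _ _
    _ ≤ _ := by
        gcongr
        exact norm_sum_smul_sq_le_sum_norm_sq_mul_sum_norm_inner s c y

end InnerProductSpace

/-- Pečarić's inequality. -/
theorem pecaric_inequality {𝕜 H : Type*} [RCLike 𝕜] [NormedAddCommGroup H]
    [InnerProductSpace 𝕜 H] {n : ℕ} (hn : 0 < n) (x : H) (y : Fin n → H) (c : Fin n → 𝕜) :
    ‖∑ k, c k * (inner 𝕜 x (y k) : 𝕜)‖ ^ 2 ≤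
        ‖x‖ ^ 2 * ∑ i, (‖c i‖ ^ 2 * ∑ j, ‖(inner 𝕜 (y i) (y j) : 𝕜)‖) ∧
      ‖x‖ ^ 2 * ∑ i, (‖c i‖ ^ 2 * ∑ j, ‖(inner 𝕜 (y i) (y j) : 𝕜)‖) ≤
        ‖x‖ ^ 2 * (∑ k, ‖c k‖ ^ 2) *
          Finset.univ.sup' (Finset.univ_nonempty_iff.mpr (Fin.pos_iff_nonempty.mp hn))
            (fun i => ∑ j, ‖(inner 𝕜 (y i) (y j) : 𝕜)‖) := by
  refine ⟨norm_sum_mul_inner_sq_le univ x c y, ?_⟩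
  rw [mul_assoc]
  gcongr
  exact univ.sum_mul_le_sum_mul_sup' _ _ _ fun i _ => sq_nonneg ‖c i‖
end

section
/- If x, y_1, ..., y_n are vectors in an inner product space (H, ⟨·,·⟩) over the real or complex field with not all ⟨x, y_k⟩ = 0, then ( ∑_{k=1}^n |⟨x, y_k⟩|² )² / ( ∑_{k=1}^n |⟨x, y_k⟩| )² ≤ ‖x‖² · max_{1≤i,j≤n} |⟨y_i, y_j⟩|. -/
/-! With `a k = ⟪x, y k⟫` put `z = ∑ k, conj (a k) • y k`, so that `⟪x, z⟫ = ∑ k, ‖a k‖²`.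
Cauchy–Schwarz gives `∑ k, ‖a k‖² ≤ ‖x‖ ‖z‖`, and expanding `‖z‖² = ⟪z, z⟫` bounds it by
`(∑ k, ‖a k‖)² · max_{i,j} ‖⟪y i, y j⟫‖`. -/

open Finset

section BesselSupPair

variable {𝕜 H ι : Type*} [RCLike 𝕜] [NormedAddCommGroup H] [InnerProductSpace 𝕜 H]

local notation "⟪" v ", " w "⟫" => inner 𝕜 v w

theorem norm_inner_sum_smul_le (s : Finset ι) (v : H) (c : ι → 𝕜) (y : ι → H) :
    ‖⟪v, ∑ j ∈ s, c j • y j⟫‖ ≤ ∑ j ∈ s, ‖c j‖ * ‖⟪v, y j⟫‖ := by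
  rw [inner_sum]
  refine (norm_sum_le _ _).trans_eq (sum_congr rfl fun j _ => ?_)
  rw [inner_smul_right, norm_mul]

theorem norm_sum_smul_sq_le_of_norm_inner_le (s : Finset ι) (c : ι → 𝕜) (y : ι → H) {M : ℝ}
    (hM : ∀ i ∈ s, ∀ j ∈ s, ‖⟪y i, y j⟫‖ ≤ M) :
    ‖∑ j ∈ s, c j • y j‖ ^ 2 ≤ (∑ j ∈ s, ‖c j‖) ^ 2 * M := by
  set z := ∑ j ∈ s, c j • y j
  have hzy : ∀ j ∈ s, ‖⟪z, y j⟫‖ ≤ (∑ i ∈ s, ‖c i‖) * M := fun j hj => by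
    rw [norm_inner_symm, sum_mul]
    exact (norm_inner_sum_smul_le s (y j) c y).trans
      (sum_le_sum fun i hi => mul_le_mul_of_nonneg_left (hM j hj i hi) (norm_nonneg _))
  calc ‖z‖ ^ 2 = ‖⟪z, z⟫‖ := by
        rw [inner_self_eq_norm_sq_to_K, norm_pow, RCLike.norm_ofReal, abs_norm]
    _ ≤ ∑ j ∈ s, ‖c j‖ * ‖⟪z, y j⟫‖ := norm_inner_sum_smul_le s z c y
    _ ≤ ∑ j ∈ s, ‖c j‖ * ((∑ i ∈ s, ‖c i‖) * M) :=
        sum_le_sum fun j hj => mul_le_mul_of_nonneg_left (hzy j hj) (norm_nonneg _)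
    _ = (∑ j ∈ s, ‖c j‖) ^ 2 * M := by rw [← sum_mul, sq, mul_assoc]

theorem inner_sum_conj_inner_smul (s : Finset ι) (x : H) (y : ι → H) :
    ⟪x, ∑ k ∈ s, (starRingEnd 𝕜 ⟪x, y k⟫) • y k⟫ = ((∑ k ∈ s, ‖⟪x, y k⟫‖ ^ 2 : ℝ) : 𝕜) := by
  rw [inner_sum]
  push_cast
  exact sum_congr rfl fun k _ => by rw [inner_smul_right, RCLike.conj_mul]

theorem sq_sum_norm_inner_sq_le (s : Finset ι) (x : H) (y : ι → H) {M : ℝ}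
    (hM : ∀ i ∈ s, ∀ j ∈ s, ‖⟪y i, y j⟫‖ ≤ M) :
    (∑ k ∈ s, ‖⟪x, y k⟫‖ ^ 2) ^ 2 ≤ ‖x‖ ^ 2 * ((∑ k ∈ s, ‖⟪x, y k⟫‖) ^ 2 * M) := by
  set z := ∑ k ∈ s, (starRingEnd 𝕜 ⟪x, y k⟫) • y k
  have hCS : ∑ k ∈ s, ‖⟪x, y k⟫‖ ^ 2 ≤ ‖x‖ * ‖z‖ := by
    have := norm_inner_le_norm (𝕜 := 𝕜) x z
    rwa [inner_sum_conj_inner_smul, RCLike.norm_ofReal,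
      abs_of_nonneg (sum_nonneg fun k _ => sq_nonneg _)] at this
  have hz : ‖z‖ ^ 2 ≤ (∑ k ∈ s, ‖⟪x, y k⟫‖) ^ 2 * M := by
    simpa only [RCLike.norm_conj] using norm_sum_smul_sq_le_of_norm_inner_le s (fun k => starRingEnd 𝕜 ⟪x, y k⟫) y hM
  calc (∑ k ∈ s, ‖⟪x, y k⟫‖ ^ 2) ^ 2 ≤ (‖x‖ * ‖z‖) ^ 2 :=
        pow_le_pow_left₀ (sum_nonneg fun k _ => sq_nonneg _) hCS 2
    _ = ‖x‖ ^ 2 * ‖z‖ ^ 2 := mul_pow _ _ 2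
    _ ≤ ‖x‖ ^ 2 * ((∑ k ∈ s, ‖⟪x, y k⟫‖) ^ 2 * M) := by gcongr

end BesselSupPair

theorem dragomir_bessel_sup_pair_bound {𝕜 H : Type*} [RCLike 𝕜] [NormedAddCommGroup H]
    [InnerProductSpace 𝕜 H] {n : ℕ} (hn : 0 < n) (x : H) (y : Fin n → H) :
    (∑ k, ‖(inner 𝕜 x (y k) : 𝕜)‖ ^ 2) ^ 2 / (∑ k, ‖(inner 𝕜 x (y k) : 𝕜)‖) ^ 2 ≤
      ‖x‖ ^ 2 *
        Finset.univ.sup'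
          (Finset.univ_nonempty_iff.mpr
            (by have := Fin.pos_iff_nonempty.mp hn; exact instNonemptyProd))
          (fun ij : Fin n × Fin n => ‖(inner 𝕜 (y ij.1) (y ij.2) : 𝕜)‖) := by
  set M := Finset.univ.sup' _ (fun ij : Fin n × Fin n => ‖(inner 𝕜 (y ij.1) (y ij.2) : 𝕜)‖)
  have hM : ∀ i ∈ univ, ∀ j ∈ univ, ‖(inner 𝕜 (y i) (y j) : 𝕜)‖ ≤ M := fun i _ j _ =>
    le_sup' (fun ij : Fin n × Fin n => ‖(inner 𝕜 (y ij.1) (y ij.2) : 𝕜)‖) (mem_univ (i, j))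
  have hM₀ : 0 ≤ M := (norm_nonneg _).trans (hM ⟨0, hn⟩ (mem_univ _) ⟨0, hn⟩ (mem_univ _))
  refine div_le_of_le_mul₀ (sq_nonneg _) (by positivity) ?_
  rw [mul_assoc, mul_comm M]
  exact sq_sum_norm_inner_sq_le univ x y hM
end
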